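/- For all real r ≥ 0 and ω ≥ 0 there holds |ω J₁(rω) − [(5/128·r⁵ − 3/16·r³ + 1/2·r)·He₀(ω) + (15/128·r⁵ − 3/8·r³ + 1/2·r)·He₂(ω) + (5/128·r⁵ − 1/16·r³)·He₄(ω) + (1/384)·r⁵·He₆(ω)]| ≤ ω⁸ r⁷ / 5040. -/

import Mathlib

open MeasureTheory

/-- Probabilists' Hermite polynomial `Heₙ(x) = (−1)ⁿ e^{x²/2} dⁿ/dxⁿ e^{−x²/2}`. -/
noncomputable def He (n : ℕ) (x : ℝ) : ℝ :=
  (-1) ^ n * Real.exp (x ^ 2 / 2) * iteratedDeriv n (fun y => Real.exp (-(y ^ 2) / 2)) x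

/-- Bessel function of the first kind of order 1: `J₁(x) = (1/π)∫₀^π cos(φ − x sin φ) dφ`. -/
noncomputable def J1 (x : ℝ) : ℝ :=
  (1 / Real.pi) * ∫ φ in (0 : ℝ)..Real.pi, Real.cos (φ - x * Real.sin φ)

/-!
Writing `t = x sin θ`, the integrand of `J₁ x = π⁻¹ ∫₀^π cos (θ - t) dθ` is
`cos θ cos t + sin θ sin t`. Replacing `cos t` and `sin t` by their degree-6 Taylor polynomials
costs at most `‖e^{it} - ∑_{k<7} (it)^k/k!‖ ≤ |t|^7/7! ≤ |x|^7/7!` pointwise; the remainder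
bound follows by induction on the degree, the derivative of each remainder being `i` times the
previous one. In the Taylor integrand the `cos θ` part is `g (sin θ) cos θ` and integrates to
zero over `[0, π]`, while the `sin θ` part is a combination of Wallis integrals; this gives
`J₁ x ≈ x/2 - x³/16 + x⁵/384`. At `x = rω`, the Hermite combination of the statement is exactly
`ω` times this polynomial.
-/

open Complex Finset Nat Polynomial

theorem hasDerivAt_cexp_I_mul_sub_sum (n : ℕ) (t : ℝ) :
    HasDerivAt (fun s : ℝ => cexp (I * s) - ∑ k ∈ range (n + 1), (I * s) ^ k / k !)
      (I * (cexp (I * t) - ∑ k ∈ range n, (I * t) ^ k / k !)) t := by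
  induction n with
  | zero =>
    simpa [mul_comm] using
      ((hasDerivAt_id (t : ℂ)).const_mul I).cexp.comp_ofReal.sub_const 1
  | succ n ih =>
    have hpow : HasDerivAt (fun s : ℝ => (I * s) ^ (n + 1) / (n + 1)!)
        (I * ((I * t) ^ n / n !)) t := by
      refine ((((hasDerivAt_id (t : ℂ)).const_mul I).pow (n + 1)).comp_ofReal.div_const
        ((n + 1)! : ℂ)).congr_deriv ?_
      push_cast [Nat.factorial_succ, id]
      field_simp
    have hsplit : (fun s : ℝ => cexp (I * s) - ∑ k ∈ range (n + 2), (I * s) ^ k / k !) =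
        fun s : ℝ => (cexp (I * s) - ∑ k ∈ range (n + 1), (I * s) ^ k / k !) -
          (I * s) ^ (n + 1) / (n + 1)! := by
      funext s; rw [sum_range_succ _ (n + 1)]; ring
    rw [hsplit]
    refine (ih.sub hpow).congr_deriv ?_
    rw [sum_range_succ]; ring

theorem norm_cexp_I_mul_sub_sum_le_of_nonneg (n : ℕ) {t : ℝ} (ht : 0 ≤ t) :
    ‖cexp (I * t) - ∑ k ∈ range n, (I * t) ^ k / (k ! : ℂ)‖ ≤ t ^ n / n ! := by
  induction n generalizing t with
  | zero => simp [Complex.norm_exp_I_mul_ofReal]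
  | succ n ih =>
    have hB : ∀ s : ℝ, HasDerivAt (fun s : ℝ => s ^ (n + 1) / (n + 1)!) (s ^ n / n !) s := by
      intro s
      refine ((hasDerivAt_pow (n + 1) s).div_const _).congr_deriv ?_
      push_cast [Nat.factorial_succ]
      field_simp
    refine image_norm_le_of_norm_deriv_right_le_deriv_boundary
      (fun s _ => (hasDerivAt_cexp_I_mul_sub_sum n s).continuousAt.continuousWithinAt)
      (fun s _ => (hasDerivAt_cexp_I_mul_sub_sum n s).hasDerivWithinAt)
      (by simp [sum_range_succ']) hB (fun s hs => ?_) ⟨ht, le_rfl⟩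
    rw [norm_mul, Complex.norm_I, one_mul]
    exact ih hs.1

theorem norm_cexp_I_mul_sub_sum_le (n : ℕ) (t : ℝ) :
    ‖cexp (I * t) - ∑ k ∈ range n, (I * t) ^ k / (k ! : ℂ)‖ ≤ |t| ^ n / n ! := by
  rcases le_total 0 t with ht | ht
  · rw [abs_of_nonneg ht]
    exact norm_cexp_I_mul_sub_sum_le_of_nonneg n ht
  · have hconj : cexp (I * t) - ∑ k ∈ range n, (I * t) ^ k / k ! =
        (starRingEnd ℂ) (cexp (I * ↑(-t)) - ∑ k ∈ range n, (I * ↑(-t)) ^ k / k !) := by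
      simp [map_sum, ← Complex.exp_conj]
    rw [hconj, Complex.norm_conj, abs_of_nonpos ht]
    exact norm_cexp_I_mul_sub_sum_le_of_nonneg n (neg_nonneg.mpr ht)

noncomputable def cosTaylor6 (t : ℝ) : ℝ := 1 - t ^ 2 / 2 + t ^ 4 / 24 - t ^ 6 / 720
noncomputable def sinTaylor6 (t : ℝ) : ℝ := t - t ^ 3 / 6 + t ^ 5 / 120

theorem sum_range_seven_I_mul_pow_div_factorial (t : ℝ) :
    ∑ k ∈ range 7, (I * t) ^ k / (k ! : ℂ) = cosTaylor6 t + sinTaylor6 t * I := by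
  simp only [mul_pow, sum_range_succ, range_one, sum_singleton, pow_zero, mul_one, factorial,
    cast_one, div_one, pow_succ, one_mul, succ_eq_add_one, zero_add, I_mul_I, neg_mul, reduceAdd,
    cast_ofNat, reduceMul, neg_neg, cosTaylor6, sinTaylor6]
  push_cast
  ring

theorem abs_cos_mul_re_add_sin_mul_im_le (θ : ℝ) (z : ℂ) :
    |Real.cos θ * z.re + Real.sin θ * z.im| ≤ ‖z‖ := by
  rw [Complex.norm_eq_sqrt_sq_add_sq]
  apply Real.abs_le_sqrt
  nlinarith [sq_nonneg (Real.cos θ * z.im - Real.sin θ * z.re), Real.sin_sq_add_cos_sq θ]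

theorem abs_cos_sub_mul_sin_sub_taylor6_le (x θ : ℝ) :
    |Real.cos (θ - x * Real.sin θ) - (Real.cos θ * cosTaylor6 (x * Real.sin θ) +
      Real.sin θ * sinTaylor6 (x * Real.sin θ))| ≤ |x| ^ 7 / 5040 := by
  set t := x * Real.sin θ
  have hE : cexp (I * t) - ∑ k ∈ range 7, (I * t) ^ k / (k ! : ℂ) =
      ⟨Real.cos t - cosTaylor6 t, Real.sin t - sinTaylor6 t⟩ := by
    rw [sum_range_seven_I_mul_pow_div_factorial, mul_comm, Complex.exp_mul_I,
      Complex.mk_eq_add_mul_I, ← Complex.ofReal_cos, ← Complex.ofReal_sin]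
    push_cast
    ring
  calc _ = |Real.cos θ * (Real.cos t - cosTaylor6 t) +
        Real.sin θ * (Real.sin t - sinTaylor6 t)| := by rw [Real.cos_sub]; ring_nf
    _ ≤ ‖cexp (I * t) - ∑ k ∈ range 7, (I * t) ^ k / (k ! : ℂ)‖ := by
        rw [hE]; exact abs_cos_mul_re_add_sin_mul_im_le θ ⟨_, _⟩
    _ ≤ |t| ^ 7 / 7 ! := norm_cexp_I_mul_sub_sum_le 7 t
    _ ≤ |x| ^ 7 / 5040 := by
      rw [abs_mul, mul_pow, Nat.factorial]
      norm_num
      gcongr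
      exact mul_le_of_le_one_right (by positivity)
        (pow_le_one₀ (abs_nonneg _) (Real.abs_sin_le_one θ))

theorem integral_comp_sin_mul_cos_eq_zero {g : ℝ → ℝ} (hg : Continuous g) :
    ∫ θ in (0 : ℝ)..Real.pi, g (Real.sin θ) * Real.cos θ = 0 := by
  have := intervalIntegral.integral_comp_mul_deriv (a := 0) (b := Real.pi)
    (fun θ _ => Real.hasDerivAt_sin θ) Real.continuous_cos.continuousOn hg
  simpa using this

theorem integral_sin_mul_sinTaylor6 (x : ℝ) :
    ∫ θ in (0 : ℝ)..Real.pi, Real.sin θ * sinTaylor6 (x * Real.sin θ) =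
      Real.pi * (x / 2 - x ^ 3 / 16 + x ^ 5 / 384) := by
  have hsplit : (fun θ => Real.sin θ * sinTaylor6 (x * Real.sin θ)) = fun θ =>
      x * Real.sin θ ^ (2 * 1) - x ^ 3 / 6 * Real.sin θ ^ (2 * 2) +
        x ^ 5 / 120 * Real.sin θ ^ (2 * 3) := by
    funext θ; simp only [sinTaylor6]; ring
  have hint (c : ℝ) (n : ℕ) :
      IntervalIntegrable (fun θ => c * Real.sin θ ^ n) volume 0 Real.pi := by
    apply Continuous.intervalIntegrable; fun_prop
  rw [hsplit, intervalIntegral.integral_add ((hint _ _).sub (hint _ _)) (hint _ _),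
    intervalIntegral.integral_sub (hint _ _) (hint _ _)]
  simp only [intervalIntegral.integral_const_mul, integral_sin_pow_even]
  norm_num [prod_range_succ]
  ring

theorem integral_cos_mul_cosTaylor6_add_sin_mul_sinTaylor6 (x : ℝ) :
    ∫ θ in (0 : ℝ)..Real.pi, (Real.cos θ * cosTaylor6 (x * Real.sin θ) +
      Real.sin θ * sinTaylor6 (x * Real.sin θ)) =
      Real.pi * (x / 2 - x ^ 3 / 16 + x ^ 5 / 384) := by
  have hcos : ∫ θ in (0 : ℝ)..Real.pi, Real.cos θ * cosTaylor6 (x * Real.sin θ) = 0 := by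
    simp_rw [mul_comm (Real.cos _)]
    exact integral_comp_sin_mul_cos_eq_zero (g := fun s => cosTaylor6 (x * s))
      (by unfold cosTaylor6; fun_prop)
  rw [intervalIntegral.integral_add, hcos, zero_add, integral_sin_mul_sinTaylor6]
  all_goals apply Continuous.intervalIntegrable; simp only [cosTaylor6, sinTaylor6]; fun_prop

theorem abs_J1_sub_taylor_le (x : ℝ) :
    |J1 x - (x / 2 - x ^ 3 / 16 + x ^ 5 / 384)| ≤ |x| ^ 7 / 5040 := by
  have hJ : Continuous fun θ => Real.cos (θ - x * Real.sin θ) := by fun_prop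
  have hT : Continuous fun θ => Real.cos θ * cosTaylor6 (x * Real.sin θ) +
      Real.sin θ * sinTaylor6 (x * Real.sin θ) := by
    simp only [cosTaylor6, sinTaylor6]; fun_prop
  have hdiff : J1 x - (x / 2 - x ^ 3 / 16 + x ^ 5 / 384) =
      (∫ θ in (0 : ℝ)..Real.pi, (Real.cos (θ - x * Real.sin θ) -
        (Real.cos θ * cosTaylor6 (x * Real.sin θ) + Real.sin θ * sinTaylor6 (x * Real.sin θ))))
        / Real.pi := by
    rw [intervalIntegral.integral_sub (hJ.intervalIntegrable _ _) (hT.intervalIntegrable _ _),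
      integral_cos_mul_cosTaylor6_add_sin_mul_sinTaylor6, J1]
    field_simp
  have hbound := intervalIntegral.norm_integral_le_of_norm_le_const (a := 0) (b := Real.pi)
    fun θ _ => (Real.norm_eq_abs _).trans_le (abs_cos_sub_mul_sin_sub_taylor6_le x θ)
  rw [hdiff, abs_div, abs_of_pos Real.pi_pos, div_le_iff₀ Real.pi_pos]
  simpa [abs_of_pos Real.pi_pos] using hbound

theorem He_eq_aeval_hermite (n : ℕ) (x : ℝ) : He n x = aeval x (hermite n) := by
  rw [hermite_eq_deriv_gaussian', He, iteratedDeriv_eq_iterate]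
  simp only [neg_div]
  ring

theorem stmt_6_general (r ω : ℝ) (hr : 0 ≤ r) :
    |ω * J1 (r * ω) -
        ((5 / 128 * r ^ 5 - 3 / 16 * r ^ 3 + 1 / 2 * r) * He 0 ω +
          (15 / 128 * r ^ 5 - 3 / 8 * r ^ 3 + 1 / 2 * r) * He 2 ω +
          (5 / 128 * r ^ 5 - 1 / 16 * r ^ 3) * He 4 ω +
          1 / 384 * r ^ 5 * He 6 ω)| ≤ ω ^ 8 * r ^ 7 / 5040 := by
  have hHermite : (5 / 128 * r ^ 5 - 3 / 16 * r ^ 3 + 1 / 2 * r) * He 0 ω +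
      (15 / 128 * r ^ 5 - 3 / 8 * r ^ 3 + 1 / 2 * r) * He 2 ω +
      (5 / 128 * r ^ 5 - 1 / 16 * r ^ 3) * He 4 ω + 1 / 384 * r ^ 5 * He 6 ω =
      ω * (r * ω / 2 - (r * ω) ^ 3 / 16 + (r * ω) ^ 5 / 384) := by
    simp only [He_eq_aeval_hermite, hermite_succ, hermite_zero, map_one, derivative_one,
      derivative_X, derivative_sub, derivative_mul, aeval_sub, map_mul, map_add, aeval_X, mul_one,
      one_mul, mul_zero, add_zero, sub_zero]
    ring
  rw [hHermite, ← mul_sub, abs_mul]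
  calc |ω| * |J1 (r * ω) - (r * ω / 2 - (r * ω) ^ 3 / 16 + (r * ω) ^ 5 / 384)|
      ≤ |ω| * (|r * ω| ^ 7 / 5040) := by gcongr; exact abs_J1_sub_taylor_le _
    _ = ω ^ 8 * r ^ 7 / 5040 := by
      rw [abs_mul, abs_of_nonneg hr, ← (by decide : Even 8).pow_abs ω]
      ring

theorem stmt_6 (r ω : ℝ) (hr : 0 ≤ r) (hω : 0 ≤ ω) :
    |ω * J1 (r * ω) -
        ((5 / 128 * r ^ 5 - 3 / 16 * r ^ 3 + 1 / 2 * r) * He 0 ω +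
          (15 / 128 * r ^ 5 - 3 / 8 * r ^ 3 + 1 / 2 * r) * He 2 ω +
          (5 / 128 * r ^ 5 - 1 / 16 * r ^ 3) * He 4 ω +
          1 / 384 * r ^ 5 * He 6 ω)| ≤ ω ^ 8 * r ^ 7 / 5040 :=
  stmt_6_general r ω hr
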